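/- arXiv:1012.5718 — 2 statements merged into one kernel-verified Lean document; each statement's English description precedes it below -/
import Mathlib

section
/- Let d ≥ 1 and let Θ : M_d(ℂ) → M_d(ℂ) be a ℂ-linear map such that for every d×d density matrix ρ, the characteristic polynomial of Θ(ρ) equals that of ρ. Then for every Hermitian matrix A ∈ M_d(ℂ), the characteristic polynomial of Θ(A) equals the characteristic polynomial of A. -/
/-!
For `t` at least minus the smallest eigenvalue of a Hermitian `A`, the matrix `A + t • 1` is
positive semidefinite, hence a positive multiple of a density matrix; since `charpoly (c • M)`
determines `charpoly M` for `c ≠ 0`, this gives `charpoly (Θ A + t • Θ 1) = charpoly (A + t • 1)`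
for all large real `t`. The coefficients of both sides are polynomials in `t`, so the identity
holds for every `t`, in particular for `t = 0`.
-/

open Matrix ComplexOrder Polynomial

namespace Matrix

variable {n : Type*} [Fintype n] [DecidableEq n]

theorem eval_mul_charpoly_smul {R : Type*} [CommRing R] (c z : R) (M : Matrix n n R) :
    (c • M).charpoly.eval (c * z) = c ^ Fintype.card n * M.charpoly.eval z := by
  rw [eval_charpoly, eval_charpoly, ← det_smul, smul_sub, scalar_apply, scalar_apply,
    ← diagonal_smul]
  rfl

theorem charpoly_eq_of_charpoly_smul_eq {R : Type*} [CommRing R] [IsDomain R] [Infinite R]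
    {c : R} (hc : c ≠ 0) {M N : Matrix n n R} (h : (c • M).charpoly = (c • N).charpoly) :
    M.charpoly = N.charpoly :=
  Polynomial.funext fun z => mul_left_cancel₀ (pow_ne_zero (Fintype.card n) hc) <| by
    rw [← eval_mul_charpoly_smul, ← eval_mul_charpoly_smul, h]

theorem charpoly_add_smul_eq_of_infinite {R : Type*} [CommRing R] [IsDomain R]
    {A B A' B' : Matrix n n R} {S : Set R} (hS : S.Infinite)
    (h : ∀ t ∈ S, (A + t • B).charpoly = (A' + t • B').charpoly) (t : R) :
    (A + t • B).charpoly = (A' + t • B').charpoly := by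
  have pencil_map_eval : ∀ (A B : Matrix n n R) (t : R),
      (A.map C + (X : R[X]) • B.map C).map (evalRingHom t) = A + t • B := by
    intro A B t
    ext i j
    simp [mul_comm (B i j)]
  have hpencil : (A.map C + (X : R[X]) • B.map C).charpoly =
      (A'.map C + (X : R[X]) • B'.map C).charpoly := by
    ext1 k
    refine Polynomial.eq_of_infinite_eval_eq _ _ (hS.mono fun t ht => ?_)
    have := congrArg (coeff · k) (h t ht)
    rw [← pencil_map_eval, ← pencil_map_eval, charpoly_map, charpoly_map] at this
    simpa using this
  rw [← pencil_map_eval, ← pencil_map_eval, charpoly_map, charpoly_map, hpencil]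

variable {𝕜 : Type*} [RCLike 𝕜]

theorem IsHermitian.posSemidef_add_smul_one {A : Matrix n n 𝕜} (hA : A.IsHermitian) {t : ℝ}
    (ht : ∀ i, 0 ≤ hA.eigenvalues i + t) : (A + (t : 𝕜) • 1).PosSemidef := by
  have hdiag : A + (t : 𝕜) • 1 = Unitary.conjStarAlgAut 𝕜 _ hA.eigenvectorUnitary
      (diagonal fun i => ((hA.eigenvalues i + t : ℝ) : 𝕜)) := by
    have hshift : (diagonal fun i => ((hA.eigenvalues i + t : ℝ) : 𝕜)) =
        diagonal (RCLike.ofReal ∘ hA.eigenvalues) + (t : 𝕜) • 1 := by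
      rw [← diagonal_one, ← diagonal_smul, diagonal_add]
      simp
    conv_lhs => rw [hA.spectral_theorem]
    rw [hshift, map_add, map_smul, map_one]
  rw [hdiag, Unitary.conjStarAlgAut_apply, Unitary.isUnit_coe.posSemidef_star_right_conjugate_iff,
    posSemidef_diagonal_iff]
  exact fun i => RCLike.ofReal_nonneg.mpr (ht i)

theorem IsHermitian.exists_forall_ge_posSemidef_add_smul_one {A : Matrix n n 𝕜}
    (hA : A.IsHermitian) : ∃ c : ℝ, ∀ t ≥ c, (A + (t : 𝕜) • 1).PosSemidef := by
  obtain ⟨c, hc⟩ := (Set.finite_range hA.eigenvalues).bddBelow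
  refine ⟨-c, fun t ht => hA.posSemidef_add_smul_one fun i => ?_⟩
  linarith [hc (Set.mem_range_self i)]

theorem charpoly_apply_eq_of_posSemidef (Θ : Matrix n n 𝕜 →ₗ[𝕜] Matrix n n 𝕜)
    (hΘ : ∀ ρ : Matrix n n 𝕜, ρ.PosSemidef → ρ.trace = 1 → (Θ ρ).charpoly = ρ.charpoly)
    {P : Matrix n n 𝕜} (hP : P.PosSemidef) : (Θ P).charpoly = P.charpoly := by
  obtain htr | htr := eq_or_ne P.trace 0
  · simp [hP.trace_eq_zero_iff.mp htr]
  refine charpoly_eq_of_charpoly_smul_eq (inv_ne_zero htr) ?_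
  rw [← map_smul]
  exact hΘ _ (hP.smul (inv_nonneg.mpr hP.trace_nonneg))
    (by rw [trace_smul, smul_eq_mul, inv_mul_cancel₀ htr])

end Matrix

theorem stmt_6_general (d : ℕ)
    (Θ : Matrix (Fin d) (Fin d) ℂ →ₗ[ℂ] Matrix (Fin d) (Fin d) ℂ)
    (hΘ : ∀ ρ : Matrix (Fin d) (Fin d) ℂ, ρ.PosSemidef → ρ.trace = 1 →
      (Θ ρ).charpoly = ρ.charpoly) :
    ∀ A : Matrix (Fin d) (Fin d) ℂ, A.IsHermitian →
      (Θ A).charpoly = A.charpoly := by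
  intro A hA
  obtain ⟨c, hc⟩ := hA.exists_forall_ge_posSemidef_add_smul_one
  have hpencil : ∀ t ∈ ((↑) : ℝ → ℂ) '' Set.Ici c,
      (Θ A + t • Θ 1).charpoly = (A + t • 1).charpoly := by
    rintro _ ⟨t, ht, rfl⟩
    rw [← map_smul, ← map_add]
    exact charpoly_apply_eq_of_posSemidef Θ hΘ (hc t ht)
  simpa using charpoly_add_smul_eq_of_infinite
    ((Set.Ici_infinite c).image Complex.ofReal_injective.injOn) hpencil 0

/-- **Lemma 3-1 of the paper.** Any ℂ-linear map on `M_d(ℂ)` preserving the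
characteristic polynomial of every density matrix preserves the characteristic
polynomial of every Hermitian matrix. -/
theorem stmt_6 (d : ℕ) (hd : 1 ≤ d)
    (Θ : Matrix (Fin d) (Fin d) ℂ →ₗ[ℂ] Matrix (Fin d) (Fin d) ℂ)
    (hΘ : ∀ ρ : Matrix (Fin d) (Fin d) ℂ, ρ.PosSemidef → ρ.trace = 1 →
      (Θ ρ).charpoly = ρ.charpoly) :
    ∀ A : Matrix (Fin d) (Fin d) ℂ, A.IsHermitian →
      (Θ A).charpoly = A.charpoly :=
  stmt_6_general d Θ hΘ
end

section
/- Let d_A, d_B ≥ 1 and let Λ : M_{d_B}(ℂ) → M_{d_B}(ℂ) be a ℂ-linear map such that the characteristic polynomial of Λ(A) equals that of A for every matrix A ∈ M_{d_B}(ℂ). Let I⊗Λ denote the blockwise extension of Λ to matrices indexed by (Fin d_A × Fin d_B). Then either for every matrix A indexed by (Fin d_A × Fin d_B) the characteristic polynomial of (I⊗Λ)(A) equals that of A, or for every such matrix A the characteristic polynomial of (I⊗Λ)(A) equals that of the partial transpose (I⊗T)(A) defined by ((I⊗T)M)((i,k),(j,l)) = M((i,l),(j,k)). -/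
open Matrix

/-- Blockwise extension `I ⊗ Λ` of a map `Λ` on `d_B × d_B` matrices to
matrices indexed by `Fin d_A × Fin d_B`:
`((I⊗Λ)M)((i,k),(j,l)) = Λ(M_{ij})(k,l)` where `M_{ij}` is the block
`(k,l) ↦ M((i,k),(j,l))`. -/
def blockExt (dA dB : ℕ)
    (Λ : Matrix (Fin dB) (Fin dB) ℂ → Matrix (Fin dB) (Fin dB) ℂ)
    (M : Matrix (Fin dA × Fin dB) (Fin dA × Fin dB) ℂ) :
    Matrix (Fin dA × Fin dB) (Fin dA × Fin dB) ℂ :=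
  Matrix.of fun p q =>
    Λ (Matrix.of fun k l => M (p.1, k) (q.1, l)) p.2 q.2

/-- Partial transposition `I ⊗ T`:
`((I⊗T)M)((i,k),(j,l)) = M((i,l),(j,k))`. -/
def partialTranspose (dA dB : ℕ)
    (M : Matrix (Fin dA × Fin dB) (Fin dA × Fin dB) ℂ) :
    Matrix (Fin dA × Fin dB) (Fin dA × Fin dB) ℂ :=
  Matrix.of fun p q => M (p.1, q.2) (q.1, p.2)

/-!
A linear map `Λ` preserving characteristic polynomials preserves `tr (A ^ 2)` and `tr (A ^ 3)`,
hence, by polarization, the trace form and the symmetrized trace of triple products. Since the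
trace form is nondegenerate, `Λ` is bijective and a Jordan homomorphism. By Herstein's argument,
a surjective Jordan homomorphism onto the prime ring `M_n` is multiplicative or
antimultiplicative, so `Λ` or `X ↦ Λ Xᵀ` is a unital algebra endomorphism of `M_n`. Applied
blockwise it is an algebra endomorphism of `M_{d_A d_B}`, and those preserve characteristic
polynomials because they preserve determinants (Skolem–Noether).
-/

open Polynomial

namespace Matrix

variable {n K : Type*} [Fintype n] [DecidableEq n] [Field K]

theorem det_sub_algebraMap (M : Matrix n n K) (r : K) :
    (M - algebraMap K _ r).det = (-1) ^ Fintype.card n * M.charpoly.eval r := by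
  rw [eval_charpoly, ← det_neg, neg_sub, algebraMap_eq_diagonal, scalar_apply]
  rfl

theorem det_aeval_eq_prod_roots [IsAlgClosed K] (M : Matrix n n K) (q : K[X]) :
    (aeval M q).det = q.leadingCoeff ^ Fintype.card n *
      (q.roots.map fun r => (-1) ^ Fintype.card n * M.charpoly.eval r).prod := by
  -- `Multiset.prod` needs a commutative monoid, so the factorization of `q` is pushed through
  -- `det ∘ aeval M` rather than through `aeval M` alone
  let detAeval : K[X] →* K := detMonoidHom.comp (aeval M : K[X] →ₐ[K] Matrix n n K).toMonoidHom
  calc (aeval M q).det = detAeval (C q.leadingCoeff * (q.roots.map fun r => X - C r).prod) := by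
        rw [C_leadingCoeff_mul_prod_multiset_X_sub_C IsAlgClosed.card_roots_eq_natDegree]; rfl
    _ = detAeval (C q.leadingCoeff) * (q.roots.map fun r => detAeval (X - C r)).prod := by
        rw [map_mul, map_multiset_prod, Multiset.map_map]; rfl
    _ = _ := by
        simp [detAeval, Algebra.algebraMap_eq_smul_one, ← det_sub_algebraMap]

theorem charpoly_aeval_eq_of_charpoly_eq [IsAlgClosed K] {M N : Matrix n n K}
    (h : M.charpoly = N.charpoly) (q : K[X]) :
    (aeval M q).charpoly = (aeval N q).charpoly := by
  refine Polynomial.funext fun z => ?_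
  have hdet (P : Matrix n n K) : (aeval P q).charpoly.eval z = (aeval P (C z - q)).det := by
    rw [eval_charpoly, map_sub, aeval_C, algebraMap_eq_diagonal, scalar_apply]
    rfl
  rw [hdet, hdet, det_aeval_eq_prod_roots, det_aeval_eq_prod_roots, h]

theorem trace_eq_of_charpoly_eq {M N : Matrix n n K} (h : M.charpoly = N.charpoly) :
    M.trace = N.trace := by
  cases isEmpty_or_nonempty n
  · simp [trace]
  · rw [trace_eq_neg_charpoly_coeff, trace_eq_neg_charpoly_coeff, h]

theorem trace_pow_eq_of_charpoly_eq [IsAlgClosed K] {M N : Matrix n n K}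
    (h : M.charpoly = N.charpoly) (k : ℕ) : (M ^ k).trace = (N ^ k).trace := by
  simpa using trace_eq_of_charpoly_eq (charpoly_aeval_eq_of_charpoly_eq h (X ^ k))

theorem charpoly_map' {F : Type*} [Infinite K] [FunLike F (Matrix n n K) (Matrix n n K)]
    [AlgHomClass F K _ _] (f : F) (A : Matrix n n K) : (f A).charpoly = A.charpoly := by
  refine Polynomial.funext fun z => ?_
  have hz : scalar n z = algebraMap K (Matrix n n K) z := by
    rw [algebraMap_eq_diagonal, scalar_apply]
    rfl
  rw [eval_charpoly, eval_charpoly, hz, ← det_map' f (algebraMap K _ z - A), map_sub,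
    AlgHomClass.commutes]

end Matrix

def IsPrimeRing (S : Type*) [Mul S] [Zero S] : Prop :=
  ∀ u v : S, (∀ x, u * x * v = 0) → u = 0 ∨ v = 0

theorem Matrix.isPrimeRing {n α : Type*} [Fintype n] [DecidableEq n] [Semiring α]
    [NoZeroDivisors α] : IsPrimeRing (Matrix n n α) := by
  intro u v h
  by_contra! huv
  obtain ⟨i, k, hik⟩ : ∃ i k, u i k ≠ 0 := by simpa [← Matrix.ext_iff] using huv.1
  obtain ⟨l, j, hlj⟩ : ∃ l j, v l j ≠ 0 := by simpa [← Matrix.ext_iff] using huv.2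
  have := congr_fun₂ (h (single k l 1)) i j
  simp only [mul_apply, single, of_apply, zero_apply, ite_and, mul_ite, mul_one, mul_zero,
    Finset.sum_ite_eq, Finset.mem_univ, if_true, ite_mul, zero_mul] at this
  exact (mul_eq_zero.1 this).elim hik hlj

theorem AddMonoidHom.eq_zero_or_eq_zero_of_forall {G H : Type*} [AddGroup G] [AddGroup H]
    (φ ψ : G →+ H) (h : ∀ x, φ x = 0 ∨ ψ x = 0) : φ = 0 ∨ ψ = 0 := by
  have := (AddSubgroupClass.subset_union (H := (⊤ : AddSubgroup G)) (K := φ.ker) (L := ψ.ker)).1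
    fun x _ => h x
  simpa only [top_le_iff, AddMonoidHom.ker_eq_top_iff] using this

theorem map_one_of_surjective_of_map_mul {M N : Type*} [MulOneClass M] [MulOneClass N]
    {f : M → N} (hsurj : Function.Surjective f) (hmul : ∀ a b, f (a * b) = f a * f b) :
    f 1 = 1 := by
  obtain ⟨x, hx⟩ := hsurj 1
  calc f 1 = f 1 * f x := by rw [hx, mul_one]
    _ = 1 := by rw [← hmul, one_mul, hx]

section JordanHom

variable {R S : Type*} [Ring R] [Ring S] [IsAddTorsionFree S] {f : R →+ S}

theorem map_mul_self_of_jordan (hf : ∀ a b, f (a * b + b * a) = f a * f b + f b * f a)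
    (a : R) : f (a * a) = f a * f a :=
  nsmul_right_injective two_ne_zero <| by simpa only [two_nsmul, map_add] using hf a a

theorem map_mul_mul_self_of_jordan (hf : ∀ a b, f (a * b + b * a) = f a * f b + f b * f a)
    (a b : R) : f (a * b * a) = f a * f b * f a := by
  have h := hf a (a * b + b * a)
  rw [hf a b, show a * (a * b + b * a) + (a * b + b * a) * a
      = (a * a * b + b * (a * a)) + 2 • (a * b * a) by noncomm_ring,
    map_add, map_nsmul, hf (a * a) b, map_mul_self_of_jordan hf] at h
  refine nsmul_right_injective two_ne_zero ?_
  dsimp only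
  rw [eq_sub_of_add_eq' h]
  noncomm_ring

theorem map_mul_mul_add_of_jordan (hf : ∀ a b, f (a * b + b * a) = f a * f b + f b * f a)
    (a x b : R) : f (a * x * b + b * x * a) = f a * f x * f b + f b * f x * f a := by
  calc f (a * x * b + b * x * a)
        = f ((a + b) * x * (a + b)) - f (a * x * a) - f (b * x * b) := by
        rw [← map_sub, ← map_sub]; congr 1; noncomm_ring
    _ = _ := by
        rw [map_mul_mul_self_of_jordan hf, map_mul_mul_self_of_jordan hf,
          map_mul_mul_self_of_jordan hf, map_add]
        noncomm_ring

theorem jordan_defects_anticommute (hf : ∀ a b, f (a * b + b * a) = f a * f b + f b * f a)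
    (a b x : R) :
    (f (a * b) - f a * f b) * f x * (f (a * b) - f b * f a) +
      (f (a * b) - f b * f a) * f x * (f (a * b) - f a * f b) = 0 := by
  have hba : f (b * a) = f a * f b + f b * f a - f (a * b) := by rw [← hf, map_add]; abel
  -- evaluate `f (ab·x·ba + ba·x·ab)` once as a Jordan triple and once as `a(bxb)a + b(axa)b`
  have h := map_mul_mul_add_of_jordan hf (a * b) x (b * a)
  rw [show a * b * x * (b * a) + b * a * x * (a * b) = a * (b * x * b) * a + b * (a * x * a) * b by
      noncomm_ring, map_add, map_mul_mul_self_of_jordan hf, map_mul_mul_self_of_jordan hf,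
    map_mul_mul_self_of_jordan hf, map_mul_mul_self_of_jordan hf, hba, ← sub_eq_zero] at h
  rw [← h]
  noncomm_ring

theorem mul_mul_mul_eq_zero_of_anticommute {g h : S} (hgh : ∀ x, g * x * h + h * x * g = 0)
    (x y : S) : h * x * (g * y * h) = 0 := by
  have J (x : S) : g * x * h = -(h * x * g) := eq_neg_of_add_eq_zero_left (hgh x)
  have hneg : h * x * (g * y * h) = -(h * x * h * y * g) := by rw [J y]; noncomm_ring
  have hpos : h * x * (g * y * h) = h * x * h * y * g :=
    calc h * x * (g * y * h) = -(g * x * h) * y * h := by rw [J x]; noncomm_ring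
      _ = -(g * (x * h * y) * h) := by noncomm_ring
      _ = h * x * h * y * g := by rw [J]; noncomm_ring
  refine nsmul_right_injective (M := S) two_ne_zero ?_
  simp only [two_nsmul, smul_zero]
  nth_rw 1 [hneg]
  rw [hpos, neg_add_cancel]

theorem map_mul_eq_mul_or_eq_mul_rev_of_jordan
    (hf : ∀ a b, f (a * b + b * a) = f a * f b + f b * f a) (hsurj : Function.Surjective f)
    (hS : IsPrimeRing S) (a b : R) :
    f (a * b) = f a * f b ∨ f (a * b) = f b * f a := by
  set g := f (a * b) - f a * f b
  set h := f (a * b) - f b * f a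
  have hgh (X : S) : g * X * h + h * X * g = 0 := by
    obtain ⟨x, rfl⟩ := hsurj X
    exact jordan_defects_anticommute hf a b x
  have hgyh (y : S) : g * y * h = 0 :=
    (hS h _ fun x => mul_mul_mul_eq_zero_of_anticommute hgh x y).elim
      (fun h0 => by rw [h0, mul_zero]) id
  exact (hS g h hgyh).imp sub_eq_zero.1 sub_eq_zero.1

theorem map_mul_or_map_mul_rev_of_jordan
    (hf : ∀ a b, f (a * b + b * a) = f a * f b + f b * f a) (hsurj : Function.Surjective f)
    (hS : IsPrimeRing S) :
    (∀ a b, f (a * b) = f a * f b) ∨ (∀ a b, f (a * b) = f b * f a) := by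
  open AddMonoidHom in
  have := eq_zero_or_eq_zero_of_forall (mul.compr₂ f - (mul.comp f).compl₂ f)
    (mul.compr₂ f - ((mul.comp f).compl₂ f).flip) fun a =>
      eq_zero_or_eq_zero_of_forall _ _ fun b => by
        simpa [sub_eq_zero] using map_mul_eq_mul_or_eq_mul_rev_of_jordan hf hsurj hS a b
  exact this.imp (fun h a b => by simpa [sub_eq_zero] using congr($h a b))
    (fun h a b => by simpa [sub_eq_zero] using congr($h a b))

end JordanHom

section

variable {n K : Type*} [Fintype n] [DecidableEq n] [Field K]

def PreservesCharpoly (Λ : Matrix n n K →ₗ[K] Matrix n n K) : Prop :=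
  ∀ A, (Λ A).charpoly = A.charpoly

namespace PreservesCharpoly

variable [IsAlgClosed K] [CharZero K] {Λ : Matrix n n K →ₗ[K] Matrix n n K}

theorem trace_mul (hΛ : PreservesCharpoly Λ) (A B : Matrix n n K) :
    trace (Λ A * Λ B) = trace (A * B) := by
  have hsq (A : Matrix n n K) : trace (Λ A * Λ A) = trace (A * A) := by
    simpa only [sq] using trace_pow_eq_of_charpoly_eq (hΛ A) 2
  have h := hsq (A + B)
  simp only [map_add, add_mul, mul_add, trace_add, trace_mul_comm (Λ B), trace_mul_comm B] at h
  linear_combination (h - hsq A - hsq B) / 2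

theorem trace_mul_add_mul_mul (hΛ : PreservesCharpoly Λ) (A B C : Matrix n n K) :
    trace ((Λ A * Λ B + Λ B * Λ A) * Λ C) = trace ((A * B + B * A) * C) := by
  have hcube (A : Matrix n n K) : trace (Λ A * Λ A * Λ A) = trace (A * A * A) := by
    simpa only [pow_three'] using trace_pow_eq_of_charpoly_eq (hΛ A) 3
  have hquad (A B : Matrix n n K) : trace (Λ A * Λ A * Λ B) + trace (Λ A * Λ B * Λ B) =
      trace (A * A * B) + trace (A * B * B) := by
    have h := hcube (A + B)
    simp only [map_add, add_mul, mul_add, trace_add] at h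
    -- cyclic invariance brings the mixed terms to the shapes `AAB` and `ABB`
    simp only [trace_mul_cycle (Λ B) (Λ A) (Λ A), trace_mul_cycle (Λ A) (Λ B) (Λ A),
      trace_mul_cycle (Λ B) (Λ A) (Λ B), trace_mul_cycle (Λ B) (Λ B) (Λ A),
      trace_mul_cycle B A A, trace_mul_cycle A B A, trace_mul_cycle B A B,
      trace_mul_cycle B B A] at h
    linear_combination (h - hcube A - hcube B) / 3
  have h := hquad (A + B) C
  simp only [map_add, add_mul, mul_add, trace_add] at h ⊢
  linear_combination h - hquad A C - hquad B C

theorem injective (hΛ : PreservesCharpoly Λ) : Function.Injective Λ := by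
  refine (injective_iff_map_eq_zero Λ).2 fun A hA => ext_iff_trace_mul_right.2 fun B => ?_
  rw [← hΛ.trace_mul, hA, zero_mul, zero_mul]

theorem surjective (hΛ : PreservesCharpoly Λ) : Function.Surjective Λ :=
  LinearMap.injective_iff_surjective.1 hΛ.injective

theorem map_mul_add_mul (hΛ : PreservesCharpoly Λ) (a b : Matrix n n K) :
    Λ (a * b + b * a) = Λ a * Λ b + Λ b * Λ a := by
  refine ext_iff_trace_mul_right.2 fun X => ?_
  obtain ⟨Y, rfl⟩ := hΛ.surjective X
  rw [hΛ.trace_mul, hΛ.trace_mul_add_mul_mul]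

theorem map_mul_or_map_mul_rev (hΛ : PreservesCharpoly Λ) :
    (∀ a b, Λ (a * b) = Λ a * Λ b) ∨ (∀ a b, Λ (a * b) = Λ b * Λ a) := by
  have : IsAddTorsionFree (Matrix n n K) := .of_module_rat _
  exact map_mul_or_map_mul_rev_of_jordan (f := Λ.toAddMonoidHom) hΛ.map_mul_add_mul
    hΛ.surjective isPrimeRing

end PreservesCharpoly

end

section BlockExt

variable {dA dB : ℕ}

theorem charpoly_blockExt_of_algHom
    (f : Matrix (Fin dB) (Fin dB) ℂ →ₐ[ℂ] Matrix (Fin dB) (Fin dB) ℂ)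
    (A : Matrix (Fin dA × Fin dB) (Fin dA × Fin dB) ℂ) :
    (blockExt dA dB f A).charpoly = A.charpoly :=
  -- read through the block identification `Matrix.comp`, `blockExt dA dB f` is `f.mapMatrix`
  charpoly_map' ((compAlgEquiv _ _ ℂ ℂ).toAlgHom.comp
    (f.mapMatrix.comp (compAlgEquiv _ _ ℂ ℂ).symm.toAlgHom)) A

end BlockExt

theorem stmt_12_general (dA dB : ℕ)
    (Λ : Matrix (Fin dB) (Fin dB) ℂ →ₗ[ℂ] Matrix (Fin dB) (Fin dB) ℂ)
    (hΛ : ∀ A : Matrix (Fin dB) (Fin dB) ℂ, (Λ A).charpoly = A.charpoly) :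
    (∀ A : Matrix (Fin dA × Fin dB) (Fin dA × Fin dB) ℂ,
        (blockExt dA dB (fun B => Λ B) A).charpoly = A.charpoly) ∨
    (∀ A : Matrix (Fin dA × Fin dB) (Fin dA × Fin dB) ℂ,
        (blockExt dA dB (fun B => Λ B) A).charpoly =
          (partialTranspose dA dB A).charpoly) := by
  have hΛ : PreservesCharpoly Λ := hΛ
  rcases hΛ.map_mul_or_map_mul_rev with hmul | hrev
  · exact .inl <| charpoly_blockExt_of_algHom <|
      .ofLinearMap Λ (map_one_of_surjective_of_map_mul hΛ.surjective hmul) hmul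
  · refine .inr fun A => ?_
    let μ := Λ ∘ₗ (transposeLinearEquiv _ _ ℂ ℂ).toLinearMap
    have hμ (a b : Matrix (Fin dB) (Fin dB) ℂ) : μ (a * b) = μ a * μ b := by
      simpa [μ] using hrev bᵀ aᵀ
    have hμsurj : Function.Surjective μ :=
      hΛ.surjective.comp (transposeLinearEquiv _ _ ℂ ℂ).surjective
    let μAlg := AlgHom.ofLinearMap μ (map_one_of_surjective_of_map_mul hμsurj hμ) hμ
    calc (blockExt dA dB (fun B => Λ B) A).charpoly
        = (blockExt dA dB μAlg (partialTranspose dA dB A)).charpoly := rfl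
      _ = _ := charpoly_blockExt_of_algHom μAlg _

/-- **Conclusion of Section 3 of the paper.** If a ℂ-linear map `Λ` on
`M_{d_B}(ℂ)` preserves the characteristic polynomial of every matrix, then the
blockwise extension `I ⊗ Λ` either preserves the characteristic polynomial of
every matrix indexed by `Fin d_A × Fin d_B`, or maps it to that of the partial
transpose. -/
theorem stmt_12 (dA dB : ℕ) (hA : 1 ≤ dA) (hB : 1 ≤ dB)
    (Λ : Matrix (Fin dB) (Fin dB) ℂ →ₗ[ℂ] Matrix (Fin dB) (Fin dB) ℂ)
    (hΛ : ∀ A : Matrix (Fin dB) (Fin dB) ℂ, (Λ A).charpoly = A.charpoly) :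
    (∀ A : Matrix (Fin dA × Fin dB) (Fin dA × Fin dB) ℂ,
        (blockExt dA dB (fun B => Λ B) A).charpoly = A.charpoly) ∨
    (∀ A : Matrix (Fin dA × Fin dB) (Fin dA × Fin dB) ℂ,
        (blockExt dA dB (fun B => Λ B) A).charpoly =
          (partialTranspose dA dB A).charpoly) :=
  stmt_12_general dA dB Λ hΛ
end
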